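/- arXiv:1303.4959 — 6 statements merged into one kernel-verified Lean document; each statement's English description precedes it below -/
import Mathlib

section
/- On the diagonal boundary y = 1-x with x∈(0,1), the inward normal component is nonnegative: -F_x(x,1-x) - F_y(x,1-x) ≥ 0, for all a>0, c>0, k∈(0,1), s∈(0,1). -/
open Real Set Filter Topology

noncomputable def Fx (c k s a x y : ℝ) : ℝ :=
  c * ((1 - x) * (1 - k) * s * (1 - y) ^ a - x * (1 - s) * (1 - x) ^ a)

noncomputable def Fy (c k s a x y : ℝ) : ℝ :=
  c * ((1 - y) * (1 - k) * (1 - s) * (1 - x) ^ a - y * s * (1 - y) ^ a)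

theorem stmt_2 (a c k s : ℝ) (ha : 0 < a) (hc : 0 < c)
    (hk : k ∈ Ioo (0:ℝ) 1) (hs : s ∈ Ioo (0:ℝ) 1) :
    ∀ x ∈ Ioo (0:ℝ) 1,
      0 ≤ -Fx c k s a x (1 - x) - Fy c k s a x (1 - x) := by
  intro x hx
  have h : -Fx c k s a x (1 - x) - Fy c k s a x (1 - x)
      = c * k * (s * (1 - x) * x ^ a + (1 - s) * x * (1 - x) ^ a) := by
    simp only [Fx, Fy, sub_sub_cancel]
    ring
  rw [h]
  have hx0 : (0:ℝ) ≤ x := hx.1.le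
  have hx1 : (0:ℝ) ≤ 1 - x := by linarith [hx.2]
  have := hk.1
  have := hs.1
  have hs1 : (0:ℝ) ≤ 1 - s := by linarith [hs.2]
  positivity
end

section
/- If (x*,y*) with x*,y*∈(0,1) satisfies F_x(x*,y*)=0 and F_y(x*,y*)=0, then y* = 1/(1 + x*/((1-k)^2(1-x*))). -/
open Real Set Filter Topology

theorem stmt_4 (a c k s x y : ℝ) (ha : 0 < a) (hc : 0 < c)
    (hk : k ∈ Ioo (0:ℝ) 1) (hs : s ∈ Ioo (0:ℝ) 1)
    (hx : x ∈ Ioo (0:ℝ) 1) (hy : y ∈ Ioo (0:ℝ) 1)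
    (heqx : Fx c k s a x y = 0) (heqy : Fy c k s a x y = 0) :
    y = 1 / (1 + x / ((1 - k) ^ 2 * (1 - x))) := by
  obtain ⟨hk0, hk1⟩ := hk
  obtain ⟨hs0, hs1⟩ := hs
  obtain ⟨hx0, hx1⟩ := hx
  obtain ⟨hy0, hy1⟩ := hy
  have hA : (0:ℝ) < (1 - x) ^ a := Real.rpow_pos_of_pos (by linarith) a
  have hB : (0:ℝ) < (1 - y) ^ a := Real.rpow_pos_of_pos (by linarith) a
  have h1 : (1 - x) * (1 - k) * s * (1 - y) ^ a = x * (1 - s) * (1 - x) ^ a := by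
    have := heqx
    unfold Fx at this
    have h := mul_eq_zero.mp this
    rcases h with h | h
    · linarith
    · linarith
  have h2 : (1 - y) * (1 - k) * (1 - s) * (1 - x) ^ a = y * s * (1 - y) ^ a := by
    have := heqy
    unfold Fy at this
    have h := mul_eq_zero.mp this
    rcases h with h | h
    · linarith
    · linarith
  have h3 : (1 - x) * (1 - y) * (1 - k) ^ 2 = x * y := by
    have hm : ((1 - x) * (1 - k) * s * (1 - y) ^ a) * ((1 - y) * (1 - k) * (1 - s) * (1 - x) ^ a)
        = (x * (1 - s) * (1 - x) ^ a) * (y * s * (1 - y) ^ a) := by rw [h1, h2]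
    have hpos : (0:ℝ) < s * (1 - s) * ((1 - x) ^ a * (1 - y) ^ a) := mul_pos (mul_pos hs0 (by linarith)) (mul_pos hA hB)
    have : ((1 - x) * (1 - y) * (1 - k) ^ 2) * (s * (1 - s) * ((1 - x) ^ a * (1 - y) ^ a))
        = (x * y) * (s * (1 - s) * ((1 - x) ^ a * (1 - y) ^ a)) := by ring_nf; ring_nf at hm; linarith
    exact mul_right_cancel₀ (ne_of_gt hpos) this
  have hkx : (0:ℝ) < (1 - k) ^ 2 * (1 - x) := mul_pos (by nlinarith) (by linarith)
  have hden : (0:ℝ) < 1 + x / ((1 - k) ^ 2 * (1 - x)) := by have := div_pos hx0 hkx; linarith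
  field_simp
  nlinarith [h3]
end

section
/- If (x*,y*) with x*,y*∈(0,1) is an interior equilibrium of F, then x* satisfies ((1-x*)/x*)^{a-1} (x* + (1-k)^2(1-x*))^a = (s/(1-s))(1-k). -/
open Real Set Filter Topology

theorem stmt_5 (a c k s x y : ℝ) (ha : 0 < a) (hc : 0 < c)
    (hk : k ∈ Ioo (0:ℝ) 1) (hs : s ∈ Ioo (0:ℝ) 1)
    (hx : x ∈ Ioo (0:ℝ) 1) (hy : y ∈ Ioo (0:ℝ) 1)
    (heqx : Fx c k s a x y = 0) (heqy : Fy c k s a x y = 0) :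
    ((1 - x) / x) ^ (a - 1) * (x + (1 - k) ^ 2 * (1 - x)) ^ a
      = s / (1 - s) * (1 - k) := by
  obtain ⟨hk0, hk1⟩ := hk
  obtain ⟨hs0, hs1⟩ := hs
  obtain ⟨hx0, hx1⟩ := hx
  obtain ⟨hy0, hy1⟩ := hy
  have h1x : (0:ℝ) < 1 - x := by linarith
  have h1y : (0:ℝ) < 1 - y := by linarith
  have h1k : (0:ℝ) < 1 - k := by linarith
  have h1s : (0:ℝ) < 1 - s := by linarith
  have hxa : (0:ℝ) < (1-x)^a := Real.rpow_pos_of_pos h1x a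
  have hya : (0:ℝ) < (1-y)^a := Real.rpow_pos_of_pos h1y a
  have hXa : (0:ℝ) < x^a := Real.rpow_pos_of_pos hx0 a
  have e1 : (1 - x) * (1 - k) * s * (1 - y) ^ a = x * (1 - s) * (1 - x) ^ a := by
    unfold Fx at heqx
    rcases mul_eq_zero.mp heqx with h | h
    · exact absurd h (ne_of_gt hc)
    · linarith
  have e2 : (1 - y) * (1 - k) * (1 - s) * (1 - x) ^ a = y * s * (1 - y) ^ a := by
    unfold Fy at heqy
    rcases mul_eq_zero.mp heqy with h | h
    · exact absurd h (ne_of_gt hc)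
    · linarith
  have hm : ((1 - x) * (1 - k) * s * (1 - y) ^ a) * ((1 - y) * (1 - k) * (1 - s) * (1 - x) ^ a)
      = (x * (1 - s) * (1 - x) ^ a) * (y * s * (1 - y) ^ a) := by rw [e1, e2]
  have hcancel : s * (1 - s) * ((1-x)^a * (1-y)^a) ≠ 0 := by positivity
  have hm' : ((1-x)*(1-k)^2*(1-y)) * (s*(1-s)*((1-x)^a*(1-y)^a))
      = (x*y) * (s*(1-s)*((1-x)^a*(1-y)^a)) := by linear_combination hm
  have key : (1-x)*(1-k)^2*(1-y) = x*y := mul_right_cancel₀ hcancel hm'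
  set S := x + (1 - k) ^ 2 * (1 - x) with hSdef
  have hS : 0 < S := by positivity
  have hy' : 1 - y = x / S := by
    rw [eq_div_iff (ne_of_gt hS)]
    linear_combination key
  have hya' : (1 - y) ^ a = x ^ a / S ^ a := by
    rw [hy', Real.div_rpow hx0.le hS.le]
  have hSa : (0:ℝ) < S ^ a := Real.rpow_pos_of_pos hS a
  have e1' : (1 - x) * (1 - k) * s * x ^ a = x * (1 - s) * (1 - x) ^ a * S ^ a := by
    have : (1 - x) * (1 - k) * s * (x ^ a / S ^ a) = x * (1 - s) * (1 - x) ^ a := by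
      rw [← hya']; exact e1
    field_simp at this
    linarith
  have hq : ((1 - x) / x) ^ (a - 1) = ((1-x)^a / x^a) * (x / (1-x)) := by
    have hqpos : (0:ℝ) < (1 - x) / x := by positivity
    rw [Real.rpow_sub hqpos, Real.rpow_one, Real.div_rpow h1x.le hx0.le]
    field_simp
  rw [hq]
  have lhs_eq : (1-x)^a / x^a * (x/(1-x)) * S^a = ((1-x)^a * x * S^a) / (x^a * (1-x)) := by
    rw [div_mul_div_comm, div_mul_eq_mul_div]
  rw [lhs_eq, div_mul_eq_mul_div, div_eq_div_iff (by positivity) (ne_of_gt h1s)]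
  linear_combination -e1'
end

section
/- For 0<a<1, k∈(0,1), and s∈(0,1), the equation g(x) = (s/(1-s))(1-k) with g(x) = ((1-x)/x)^{a-1}(x + (1-k)^2(1-x))^a has exactly one solution x* in (0,1). (In particular g is continuous and strictly monotonically increasing on (0,1).) -/
/-! `g` is the product of `((1 - x) / x) ^ (a - 1)`, which increases from `0` to `∞` on
`(0, 1)` because `a - 1 < 0`, and of the positive, nondecreasing factor `(x + (1 - k) ^ 2 * (1 - x)) ^ a`.
So `g` is a continuous strictly increasing map of `(0, 1)` onto `(0, ∞)`. -/

open Real Set Filter Topology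

noncomputable def g (a k x : ℝ) : ℝ :=
  ((1 - x) / x) ^ (a - 1) * (x + (1 - k) ^ 2 * (1 - x)) ^ a

lemma one_sub_div_self_pos {x : ℝ} (hx : x ∈ Ioo (0 : ℝ) 1) : 0 < (1 - x) / x :=
  div_pos (sub_pos.2 hx.2) hx.1

lemma add_sq_mul_one_sub_pos (k : ℝ) {x : ℝ} (hx : x ∈ Ioo (0 : ℝ) 1) :
    0 < x + (1 - k) ^ 2 * (1 - x) := by
  nlinarith [hx.1, hx.2, sq_nonneg (1 - k)]

lemma continuousOn_g (a k : ℝ) : ContinuousOn (g a k) (Ioo 0 1) := by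
  refine ContinuousOn.mul ?_ ?_
  · refine ContinuousOn.rpow_const ?_ fun x hx => .inl (one_sub_div_self_pos hx).ne'
    exact (continuousOn_const.sub continuousOn_id).div continuousOn_id fun x hx => hx.1.ne'
  · exact ContinuousOn.rpow_const (by fun_prop) fun x hx => .inl (add_sq_mul_one_sub_pos k hx).ne'

lemma strictMonoOn_g {a k : ℝ} (ha0 : 0 ≤ a) (ha1 : a < 1) (hk : (1 - k) ^ 2 ≤ 1) :
    StrictMonoOn (g a k) (Ioo 0 1) := by
  intro x hx y hy hxy
  have hodds : ((1 - x) / x) ^ (a - 1) < ((1 - y) / y) ^ (a - 1) := by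
    refine rpow_lt_rpow_of_neg (one_sub_div_self_pos hy) ?_ (by linarith)
    rw [div_lt_div_iff₀ hy.1 hx.1]
    nlinarith [hx.1]
  have hlin : (x + (1 - k) ^ 2 * (1 - x)) ^ a ≤ (y + (1 - k) ^ 2 * (1 - y)) ^ a :=
    rpow_le_rpow (add_sq_mul_one_sub_pos k hx).le (by nlinarith) ha0
  exact mul_lt_mul hodds hlin (rpow_pos_of_pos (add_sq_mul_one_sub_pos k hx) _)
    (rpow_pos_of_pos (one_sub_div_self_pos hy) _).le

lemma tendsto_g_nhdsGT_zero {a : ℝ} (k : ℝ) (ha0 : 0 ≤ a) (ha1 : a < 1) :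
    Tendsto (g a k) (𝓝[>] 0) (𝓝 0) := by
  have hodds : Tendsto (fun x : ℝ => (1 - x) / x) (𝓝[>] 0) atTop := by
    refine (tendsto_atTop_add_const_right _ (-1) tendsto_inv_nhdsGT_zero).congr' ?_
    filter_upwards [self_mem_nhdsWithin] with x (hx : 0 < x)
    field_simp
    ring
  have hpow : Tendsto (fun u : ℝ => u ^ (a - 1)) atTop (𝓝 0) := by
    simpa using tendsto_rpow_neg_atTop (sub_pos.2 ha1)
  have hlin : ContinuousAt (fun x : ℝ => (x + (1 - k) ^ 2 * (1 - x)) ^ a) 0 :=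
    (continuousAt_rpow_const _ a (.inr ha0)).comp (by fun_prop)
  have := (hpow.comp hodds).mul (hlin.tendsto.mono_left nhdsWithin_le_nhds)
  rwa [zero_mul] at this

lemma tendsto_g_nhdsLT_one {a : ℝ} (k : ℝ) (ha1 : a < 1) :
    Tendsto (g a k) (𝓝[<] 1) atTop := by
  have hodds : Tendsto (fun x : ℝ => (1 - x) / x) (𝓝[<] 1) (𝓝[>] 0) := by
    refine tendsto_nhdsWithin_iff.2 ⟨?_, ?_⟩
    · have hc : ContinuousAt (fun x : ℝ => (1 - x) / x) 1 := by
        fun_prop (disch := norm_num)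
      simpa using hc.tendsto.mono_left nhdsWithin_le_nhds
    · filter_upwards [Ioo_mem_nhdsLT zero_lt_one] with x hx
      exact one_sub_div_self_pos hx
  have hlin : ContinuousAt (fun x : ℝ => (x + (1 - k) ^ 2 * (1 - x)) ^ a) 1 :=
    (continuousAt_rpow_const _ a (.inl (by norm_num))).comp (by fun_prop)
  refine ((tendsto_rpow_neg_nhdsGT_zero (sub_neg.2 ha1)).comp hodds).atTop_mul_pos one_pos ?_
  simpa using hlin.tendsto.mono_left nhdsWithin_le_nhds

theorem stmt_8 (a k s : ℝ) (ha0 : 0 < a) (ha1 : a < 1)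
    (hk : k ∈ Ioo (0:ℝ) 1) (hs : s ∈ Ioo (0:ℝ) 1) :
    (∃! x, x ∈ Ioo (0:ℝ) 1 ∧ g a k x = s / (1 - s) * (1 - k)) ∧
    ContinuousOn (g a k) (Ioo 0 1) ∧ StrictMonoOn (g a k) (Ioo 0 1) := by
  have hcont := continuousOn_g a k
  have hmono : StrictMonoOn (g a k) (Ioo 0 1) :=
    strictMonoOn_g ha0.le ha1 (by nlinarith [hk.1, hk.2])
  have htarget : 0 < s / (1 - s) * (1 - k) :=
    mul_pos (div_pos hs.1 (sub_pos.2 hs.2)) (sub_pos.2 hk.2)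
  have hsurj : Ioi 0 ⊆ g a k '' Ioo 0 1 := by
    refine isPreconnected_Ioo.intermediate_value_Ioi ?_ ?_ hcont
      (tendsto_g_nhdsGT_zero k ha0.le ha1) (tendsto_g_nhdsLT_one k ha1)
    · exact le_principal_iff.2 (Ioo_mem_nhdsGT zero_lt_one)
    · exact le_principal_iff.2 (Ioo_mem_nhdsLT zero_lt_one)
  obtain ⟨x, hx, hgx⟩ := hsurj htarget
  exact ⟨⟨x, ⟨hx, hgx⟩, fun y hy => hmono.injOn hy.1 hx (hy.2.trans hgx.symm)⟩, hcont, hmono⟩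
end

section
/- For a>1, the Jacobian of F at (1,0) is the diagonal matrix diag(-c(1-k)s, -cs), with both eigenvalues strictly negative, so (1,0) is asymptotically stable for all k,s∈(0,1). -/
open Real Set Filter Topology

/-! Each term of `F` is a product with a factor vanishing at `(1, 0)`, so its derivative there is
the derivative of that factor times the value of the other. For `a > 1` the factor `(1 - x) ^ a`
vanishes to first order (`t ↦ t ^ a` has derivative `a * 0 ^ (a - 1) = 0` at `0`), so only the
linear factors `1 - x` in `Fx` and `y` in `Fy` contribute, each multiplied by `(1 - 0) ^ a = 1`. -/

section

variable {a : ℝ}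

theorem hasFDerivAt_one_sub_fst_rpow_of_one_lt (ha : 1 < a) (y : ℝ) :
    HasFDerivAt (fun p : ℝ × ℝ => (1 - p.1) ^ a) (0 : ℝ × ℝ →L[ℝ] ℝ) (1, y) := by
  have h := (hasFDerivAt_fst.const_sub (1 : ℝ) (x := ((1 : ℝ), y))).rpow_const
    (p := a) (Or.inr ha.le)
  simpa [zero_rpow (sub_ne_zero.2 ha.ne')] using h

theorem differentiableAt_one_sub_snd_rpow (ha : 1 ≤ a) (p : ℝ × ℝ) :
    DifferentiableAt ℝ (fun p : ℝ × ℝ => (1 - p.2) ^ a) p :=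
  (differentiableAt_snd.const_sub 1).rpow_const (Or.inr ha)

theorem hasFDerivAt_Fx_one_zero (c k s : ℝ) (ha : 1 < a) :
    HasFDerivAt (fun p : ℝ × ℝ => Fx c k s a p.1 p.2)
      ((-(c * (1 - k) * s)) • ContinuousLinearMap.fst ℝ ℝ ℝ) (1, 0) := by
  have inflow := (((hasFDerivAt_fst.const_sub 1).mul_const (1 - k)).mul_const s).mul
    (differentiableAt_one_sub_snd_rpow ha.le (1, 0)).hasFDerivAt
  have outflow := (hasFDerivAt_fst.mul_const (1 - s)).mul
    (hasFDerivAt_one_sub_fst_rpow_of_one_lt ha 0)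
  refine ((inflow.sub outflow).const_mul c).congr_fderiv
    (ContinuousLinearMap.ext fun p => ?_)
  simp [zero_rpow (zero_lt_one.trans ha).ne']
  ring

theorem hasFDerivAt_Fy_one_zero (c k s : ℝ) (ha : 1 < a) :
    HasFDerivAt (fun p : ℝ × ℝ => Fy c k s a p.1 p.2)
      ((-(c * s)) • ContinuousLinearMap.snd ℝ ℝ ℝ) (1, 0) := by
  have inflow := (((hasFDerivAt_snd.const_sub 1).mul_const (1 - k)).mul_const (1 - s)).mul
    (hasFDerivAt_one_sub_fst_rpow_of_one_lt ha 0)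
  have outflow := (hasFDerivAt_snd.mul_const s).mul
    (differentiableAt_one_sub_snd_rpow ha.le (1, 0)).hasFDerivAt
  refine ((inflow.sub outflow).const_mul c).congr_fderiv
    (ContinuousLinearMap.ext fun p => ?_)
  simp [zero_rpow (zero_lt_one.trans ha).ne']
  ring

end

theorem stmt_10 (a c k s : ℝ) (ha : 1 < a) (hc : 0 < c)
    (hk : k ∈ Ioo (0:ℝ) 1) (hs : s ∈ Ioo (0:ℝ) 1) :
    HasFDerivAt (fun p : ℝ × ℝ => (Fx c k s a p.1 p.2, Fy c k s a p.1 p.2))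
      ((((-(c * (1 - k) * s)) • ContinuousLinearMap.fst ℝ ℝ ℝ).prod
        ((-(c * s)) • ContinuousLinearMap.snd ℝ ℝ ℝ)) :
        ℝ × ℝ →L[ℝ] ℝ × ℝ)
      ((1 : ℝ), (0 : ℝ)) ∧
    -(c * (1 - k) * s) < 0 ∧ -(c * s) < 0 := by
  have hk' : 0 < 1 - k := sub_pos.2 hk.2
  refine ⟨(hasFDerivAt_Fx_one_zero c k s ha).prodMk (hasFDerivAt_Fy_one_zero c k s ha), ?_, ?_⟩
  · exact neg_neg_of_pos (mul_pos (mul_pos hc hk') hs.1)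
  · exact neg_neg_of_pos (mul_pos hc hs.1)
end

section
/- For a=1, the eigenvalues of the Jacobian of F at (0,1) are -c(1-s) and -c(1-k)(1-s)+cs; consequently (0,1) is hyperbolic asymptotically stable if and only if s < (1-k)/(2-k). -/
open Real Set Filter Topology

noncomputable def Fx1 (c k s x y : ℝ) : ℝ :=
  c * ((1 - x) * (1 - k) * s * (1 - y) - x * (1 - s) * (1 - x))

noncomputable def Fy1 (c k s x y : ℝ) : ℝ :=
  c * ((1 - y) * (1 - k) * (1 - s) * (1 - x) - y * s * (1 - y))

section Jacobian

variable (c k s : ℝ) (p : ℝ × ℝ)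

theorem hasFDerivAt_Fx1 :
    HasFDerivAt (fun q : ℝ × ℝ => Fx1 c k s q.1 q.2)
      ((-c * ((1 - k) * s * (1 - p.2) + (1 - s) * (1 - 2 * p.1))) • ContinuousLinearMap.fst ℝ ℝ ℝ +
        (-c * (1 - p.1) * (1 - k) * s) • ContinuousLinearMap.snd ℝ ℝ ℝ) p := by
  have hx : HasFDerivAt (fun q : ℝ × ℝ => q.1) (ContinuousLinearMap.fst ℝ ℝ ℝ) p := hasFDerivAt_fst
  have hy : HasFDerivAt (fun q : ℝ × ℝ => q.2) (ContinuousLinearMap.snd ℝ ℝ ℝ) p := hasFDerivAt_snd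
  have h1x := (hasFDerivAt_const 1 p).sub hx
  have h1y := (hasFDerivAt_const 1 p).sub hy
  refine ((((h1x.mul_const (1 - k)).mul_const s).mul h1y).sub
    ((hx.mul_const (1 - s)).mul h1x)).const_mul c |>.congr_fderiv ?_
  ext <;> simp <;> ring

theorem hasFDerivAt_Fy1 :
    HasFDerivAt (fun q : ℝ × ℝ => Fy1 c k s q.1 q.2)
      ((-c * (1 - p.2) * (1 - k) * (1 - s)) • ContinuousLinearMap.fst ℝ ℝ ℝ +
        (-c * ((1 - k) * (1 - s) * (1 - p.1) + s * (1 - 2 * p.2))) • ContinuousLinearMap.snd ℝ ℝ ℝ)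
      p := by
  have hx : HasFDerivAt (fun q : ℝ × ℝ => q.1) (ContinuousLinearMap.fst ℝ ℝ ℝ) p := hasFDerivAt_fst
  have hy : HasFDerivAt (fun q : ℝ × ℝ => q.2) (ContinuousLinearMap.snd ℝ ℝ ℝ) p := hasFDerivAt_snd
  have h1x := (hasFDerivAt_const 1 p).sub hx
  have h1y := (hasFDerivAt_const 1 p).sub hy
  refine ((((h1y.mul_const (1 - k)).mul_const (1 - s)).mul h1x).sub
    ((hy.mul_const s).mul h1y)).const_mul c |>.congr_fderiv ?_
  ext <;> simp <;> ring

end Jacobian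

theorem neg_mul_one_sub_add_mul_neg_iff {c k s : ℝ} (hc : 0 < c) (hk : k < 2) :
    -(c * (1 - k) * (1 - s)) + c * s < 0 ↔ s < (1 - k) / (2 - k) := by
  rw [show -(c * (1 - k) * (1 - s)) + c * s = c * (s * (2 - k) - (1 - k)) by ring,
    lt_div_iff₀ (by linarith), ← sub_neg (a := s * (2 - k))]
  simpa only [mul_zero] using mul_lt_mul_iff_right₀ hc (c := 0)

theorem stmt_11 (c k s : ℝ) (hc : 0 < c)
    (hk : k ∈ Ioo (0:ℝ) 1) (hs : s ∈ Ioo (0:ℝ) 1) :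
    HasFDerivAt (fun p : ℝ × ℝ => (Fx1 c k s p.1 p.2, Fy1 c k s p.1 p.2))
      ((((-(c * (1 - s))) • ContinuousLinearMap.fst ℝ ℝ ℝ +
          (-(c * (1 - k) * s)) • ContinuousLinearMap.snd ℝ ℝ ℝ).prod
        ((-(c * (1 - k) * (1 - s)) + c * s) • ContinuousLinearMap.snd ℝ ℝ ℝ)) :
        ℝ × ℝ →L[ℝ] ℝ × ℝ)
      ((0 : ℝ), (1 : ℝ)) ∧
    ((-(c * (1 - s)) < 0 ∧ -(c * (1 - k) * (1 - s)) + c * s < 0) ↔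
      s < (1 - k) / (2 - k)) := by
  refine ⟨?_, ?_⟩
  · refine ((hasFDerivAt_Fx1 c k s (0, 1)).prodMk (hasFDerivAt_Fy1 c k s (0, 1))).congr_fderiv ?_
    ext <;> simp; ring
  · have hfirst : -(c * (1 - s)) < 0 := neg_neg_of_pos (mul_pos hc (sub_pos.2 hs.2))
    rw [← neg_mul_one_sub_add_mul_neg_iff hc (by linarith [hk.2])]
    exact and_iff_right hfirst
end
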